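/- arXiv:2410.09887 — 5 statements merged into one kernel-verified Lean document; each statement's English description precedes it below -/
import Mathlib

section
/- In an acyclic simple graph, if A and B are path-closed sets of vertices such that every path from a vertex of A to a vertex of B contains a vertex of A ∩ B, then A ∪ B is path-closed. -/
/-- A set of vertices is path-closed ("nice") if for any two of its vertices,
every vertex on any path between them belongs to the set. -/
def PathClosed {V : Type*} (G : SimpleGraph V) (S : Set V) : Prop :=
  ∀ a b : V, a ∈ S → b ∈ S → ∀ p : G.Path a b, ∀ x ∈ p.val.support, x ∈ S

private lemma pathClosed_union_aux {V : Type*} (G : SimpleGraph V)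
    (A B : Set V) (hA : PathClosed G A) (hB : PathClosed G B)
    (hAB : ∀ a ∈ A, ∀ b ∈ B, ∀ p : G.Path a b, ∃ z ∈ p.val.support, z ∈ A ∩ B)
    {a b : V} (ha : a ∈ A) (hb : b ∈ B) (p : G.Path a b) :
    ∀ x ∈ p.val.support, x ∈ A ∪ B := by
  classical
  intro x hx
  obtain ⟨z, hz, hzA, hzB⟩ := hAB a ha b hb p
  have hspec := p.val.take_spec hz
  have hsup : x ∈ (p.val.takeUntil z hz).support ∨ x ∈ (p.val.dropUntil z hz).support := by
    rw [← hspec, SimpleGraph.Walk.support_append, List.mem_append] at hx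
    rcases hx with h | h
    · exact Or.inl h
    · exact Or.inr (List.mem_of_mem_tail h)
  have h1 : (p.val.takeUntil z hz).IsPath := p.2.takeUntil hz
  have h2 : (p.val.dropUntil z hz).IsPath := p.2.dropUntil hz
  rcases hsup with h | h
  · exact Or.inl (hA a z ha hzA ⟨_, h1⟩ x h)
  · exact Or.inr (hB z b hzB hb ⟨_, h2⟩ x h)

/-- In an acyclic simple graph, if `A` and `B` are path-closed sets of vertices such that
every path from a vertex of `A` to a vertex of `B` contains a vertex of `A ∩ B`,
then `A ∪ B` is path-closed. -/
theorem pathClosed_union {V : Type*} (G : SimpleGraph V) (hG : G.IsAcyclic)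
    (A B : Set V) (hA : PathClosed G A) (hB : PathClosed G B)
    (hAB : ∀ a ∈ A, ∀ b ∈ B, ∀ p : G.Path a b, ∃ z ∈ p.val.support, z ∈ A ∩ B) :
    PathClosed G (A ∪ B) := by
  intro a b ha hb p x hx
  rcases ha with ha | ha
  · rcases hb with hb | hb
    · exact Or.inl (hA a b ha hb p x hx)
    · exact pathClosed_union_aux G A B hA hB hAB ha hb p x hx
  · rcases hb with hb | hb
    · have := pathClosed_union_aux G A B hA hB hAB hb ha p.reverse x
      rw [SimpleGraph.Path.reverse] at this
      exact this (by simpa using hx)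
    · exact Or.inr (hB a b ha hb p x hx)
end

section
/- In an acyclic simple graph, let M be a nonempty path-closed set of vertices and u a vertex connected to some vertex of M. If m ∈ M is a vertex of M at minimal graph distance from u, then for every vertex m' ∈ M connected to u, the unique path from u to m' passes through m (the 'gate' property of path-closed subsets of trees). -/
namespace SimpleGraph.Walk

variable {V : Type*} {G : SimpleGraph V} {u v w : V}

theorem IsPath.append {p : G.Walk u v} {q : G.Walk v w} (hp : p.IsPath) (hq : q.IsPath)
    (hpq : ∀ x ∈ p.support, x ∈ q.support → x = v) : (p.append q).IsPath := by
  have hq' := hq.support_nodup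
  rw [← cons_tail_support] at hq'
  rw [isPath_def, support_append, List.nodup_append]
  refine ⟨hp.support_nodup, hq'.of_cons, fun x hxp y hyq hxy => ?_⟩
  subst hxy
  obtain rfl := hpq x hxp (List.mem_of_mem_tail hyq)
  exact (List.nodup_cons.mp hq').1 hyq

theorem eq_of_mem_support_of_length_eq_dist {p : G.Walk u v} (hp : p.length = G.dist u v)
    (hw : w ∈ p.support) (hdist : G.dist u v ≤ G.dist u w) : w = v := by
  classical
  by_contra hwv
  have := length_takeUntil_lt_length hw hwv
  have := dist_le (p.takeUntil w hw)
  omega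

end SimpleGraph.Walk

theorem gate_property_general {V : Type*} (G : SimpleGraph V) (hG : G.IsAcyclic)
    (M : Set V) (hM : PathClosed G M)
    (u m : V) (hm : m ∈ M) (hreach : G.Reachable u m)
    (hmin : ∀ m'' ∈ M, G.Reachable u m'' → G.dist u m ≤ G.dist u m'') :
    ∀ m' ∈ M, ∀ p : G.Path u m', m ∈ p.val.support := by
  classical
  intro m' hm' p
  obtain ⟨q, hq, hq_len⟩ := hreach.exists_path_of_dist
  obtain ⟨s, hs, -⟩ := (hreach.symm.trans ⟨p.val⟩).exists_path_of_dist
  have hsM : ∀ x ∈ s.support, x ∈ M := hM m m' hm hm' ⟨s, hs⟩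
  have hqs : (q.append s).IsPath := hq.append hs fun x hxq hxs =>
    q.eq_of_mem_support_of_length_eq_dist hq_len hxq
      (hmin x (hsM x hxs) ⟨q.takeUntil x hxq⟩)
  rw [(hG.subsingleton_path u m').elim p ⟨_, hqs⟩, SimpleGraph.Walk.mem_support_append_iff]
  exact Or.inl q.end_mem_support

/-- Gate property: in an acyclic simple graph, let `M` be a nonempty path-closed set of
vertices and `u` a vertex connected to some vertex of `M`. If `m ∈ M` realizes the
minimal distance from `u` to `M`, then every path from `u` to any vertex `m' ∈ M`
passes through `m`. -/
theorem gate_property {V : Type*} (G : SimpleGraph V) (hG : G.IsAcyclic)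
    (M : Set V) (hM : PathClosed G M) (hne : M.Nonempty)
    (u m : V) (hm : m ∈ M) (hreach : G.Reachable u m)
    (hmin : ∀ m'' ∈ M, G.Reachable u m'' → G.dist u m ≤ G.dist u m'') :
    ∀ m' ∈ M, ∀ p : G.Path u m', m ∈ p.val.support :=
  gate_property_general G hG M hM u m hm hreach hmin
end

section
/- If L and M are intermediate fields of an ambient field extension of k that are linearly disjoint over k, and elements a₁, …, aₙ of L are algebraically independent over k, then a₁, …, aₙ are algebraically independent over M. -/
/-- Subfields `L` and `M` (containing `k`) of an ambient field are linearly disjoint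
over `k` if every finite tuple of elements of `L` that is linearly independent over `k`
remains linearly independent over `M`. -/
def LinDisj {K : Type*} [Field K] (k L M : Subfield K) : Prop :=
  ∀ (n : ℕ) (a : Fin n → K), (∀ i, a i ∈ L) →
    LinearIndependent ↥k a → LinearIndependent ↥M a

/-- Evaluation of a multivariate polynomial as a sum of scalar multiples of monomials. -/
lemma aeval_eq_sum_smul {K : Type*} [Field K] {F : Type*} [Field F] [Algebra F K]
    (n : ℕ) (a : Fin n → K) (p : MvPolynomial (Fin n) F) :
    MvPolynomial.aeval a p
      = ∑ d ∈ p.support, p.coeff d • ∏ i, a i ^ d i := by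
  rw [MvPolynomial.aeval_def, MvPolynomial.eval₂_eq']
  simp [Algebra.smul_def]

/-- Linear disjointness extends to arbitrary index types. -/
lemma linDisj_family {K : Type*} [Field K] (k L M : Subfield K)
    (hld : LinDisj k L M) {ι : Type*} (f : ι → K) (hfL : ∀ i, f i ∈ L)
    (hf : LinearIndependent ↥k f) : LinearIndependent ↥M f := by
  rw [linearIndependent_iff']
  intro s g hg i hi
  set m := s.card with hm
  let e : Fin m ≃ s := (s.equivFin).symm
  have hinj : Function.Injective (fun j : Fin m => (e j : ι)) :=
    Subtype.coe_injective.comp e.injective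
  have hbk : LinearIndependent ↥k (fun j : Fin m => f (e j)) := hf.comp _ hinj
  have hbM : LinearIndependent ↥M (fun j : Fin m => f (e j)) :=
    hld m _ (fun j => hfL _) hbk
  rw [linearIndependent_iff'] at hbM
  have hsum : ∑ j : Fin m, g (e j) • f (e j) = 0 := by
    rw [← hg, ← Finset.sum_coe_sort s (fun i => g i • f i)]
    exact (Equiv.sum_comp e (fun i : s => g (i : ι) • f (i : ι)))
  have := hbM Finset.univ (fun j => g (e j)) hsum (e.symm ⟨i, hi⟩) (Finset.mem_univ _)
  simpa using this

/-- If `L` and `M` are linearly disjoint over `k` and `a₁, …, aₙ ∈ L` are algebraically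
independent over `k`, then they are algebraically independent over `M`. -/
theorem algIndep_of_linDisj {K : Type*} [Field K] (k L M : Subfield K)
    (hkL : k ≤ L) (hkM : k ≤ M) (hld : LinDisj k L M)
    (n : ℕ) (a : Fin n → K) (haL : ∀ i, a i ∈ L)
    (hai : AlgebraicIndependent ↥k a) :
    AlgebraicIndependent ↥M a := by
  set mon : (Fin n →₀ ℕ) → K := fun d => ∏ i, a i ^ d i with hmon
  -- monomials lie in L
  have hmonL : ∀ d, mon d ∈ L := fun d =>
    Subfield.prod_mem L (fun i _ => Subfield.pow_mem L (haL i) _)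
  -- monomials are linearly independent over k
  have hk : LinearIndependent ↥k mon := by
    rw [linearIndependent_iff']
    intro s g hg d hd
    set p : MvPolynomial (Fin n) ↥k :=
      ∑ d ∈ s, MvPolynomial.monomial d (g d) with hp
    have hev : MvPolynomial.aeval a p = 0 := by
      rw [hp, map_sum, ← hg]
      refine Finset.sum_congr rfl fun d _ => ?_
      rw [MvPolynomial.aeval_monomial, Algebra.smul_def, Finsupp.prod_pow]
    have hp0 : p = 0 := (algebraicIndependent_iff.mp hai) p hev
    have := congrArg (MvPolynomial.coeff d) hp0
    rw [hp] at this
    simpa [MvPolynomial.coeff_sum, MvPolynomial.coeff_monomial,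
      Finset.sum_ite_eq' s d, hd] using this
  -- hence over M
  have hM : LinearIndependent ↥M mon := linDisj_family k L M hld mon hmonL hk
  rw [algebraicIndependent_iff]
  intro p hp
  rw [aeval_eq_sum_smul] at hp
  rw [linearIndependent_iff'] at hM
  have := hM p.support (fun d => p.coeff d) hp
  ext d
  by_cases hd : d ∈ p.support
  · simpa using congrArg (Subtype.val) (this d hd)
  · simpa using MvPolynomial.notMem_support_iff.mp hd
end

section
/- Linear disjointness satisfies transitivity: for subfields k ⊆ B and fields L ⊇ k, D ⊇ B inside an ambient field, if L is linearly disjoint from B over k and the compositum L·B is linearly disjoint from D over B, then L is linearly disjoint from D over k. -/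
/-- Transitivity of linear disjointness: with `k ⊆ B ⊆ D` and `k ⊆ L`, if `L` is
linearly disjoint from `B` over `k` and the compositum `L ⊔ B` is linearly disjoint
from `D` over `B`, then `L` is linearly disjoint from `D` over `k`. -/
theorem linDisj_trans {K : Type*} [Field K] (k B D L : Subfield K)
    (hkB : k ≤ B) (hBD : B ≤ D) (hkL : k ≤ L)
    (h1 : LinDisj k L B) (h2 : LinDisj B (L ⊔ B) D) :
    LinDisj k L D := by
  intro n a ha hk
  exact h2 n a (fun i => (le_sup_left : L ≤ L ⊔ B) (ha i)) (h1 n a ha hk)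
end

section
/- Kolchin's linear disjointness theorem: if (K, δ) is a differential field and k is a differential subfield (closed under δ), then k is linearly disjoint from the constant field C_K over the constant field C_k = k ∩ C_K; that is, any elements of k linearly independent over C_k remain linearly independent over C_K. -/
/-!
Linear disjointness is symmetric, so it suffices to show that constants of `K` which are
linearly independent over `C_k` stay linearly independent over `k`. Take a `k`-linear relation
among such constants with minimal support and scale one coefficient to `1`. Differentiating
kills the constants and the coefficient `1`, leaving a relation with smaller support, which
must therefore be trivial. Hence all coefficients are constants lying in `k`, that is, they lie
in `C_k`, and the relation is trivial after all.
-/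

section

variable {K ι : Type*} [Field K]

namespace Subfield

theorem linearIndependent_iff_forall_finset (S : Subfield K) {v : ι → K} :
    LinearIndependent S v ↔ ∀ (s : Finset ι) (c : ι → K), (∀ i ∈ s, c i ∈ S) →
      ∑ i ∈ s, c i * v i = 0 → ∀ i ∈ s, c i = 0 := by
  classical
  rw [linearIndependent_iff']
  constructor
  · intro h s c hc hsum i hi
    have hsum' : ∑ j ∈ s, (if hj : j ∈ s then ⟨c j, hc j hj⟩ else 0 : S) • v j = 0 := by
      rw [← hsum]
      exact Finset.sum_congr rfl fun j hj => by simp [hj, Subfield.smul_def]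
    simpa [hi] using congrArg Subtype.val (h s _ hsum' i hi)
  · intro h s g hsum i hi
    exact Subtype.ext (h s (fun j => g j) (fun j _ => (g j).2) hsum i hi)

theorem linearIndependent_iff_of_fintype [Fintype ι] (S : Subfield K) {v : ι → K} :
    LinearIndependent S v ↔
      ∀ c : ι → K, (∀ i, c i ∈ S) → ∑ i, c i * v i = 0 → ∀ i, c i = 0 := by
  rw [Fintype.linearIndependent_iff]
  constructor
  · intro h c hc hsum i
    exact congrArg Subtype.val (h (fun j => ⟨c j, hc j⟩) hsum i)
  · intro h g hsum i
    exact Subtype.ext (h (fun j => g j) (fun j => (g j).2) hsum i)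

end Subfield

namespace Derivation

def ofLeibniz {A : Type*} [CommRing A] (δ : A → A) (map_add : ∀ x y : A, δ (x + y) = δ x + δ y)
    (leibniz : ∀ x y : A, δ (x * y) = x * δ y + y * δ x) : Derivation ℤ A A :=
  Derivation.mk' (AddMonoidHom.mk' δ map_add).toIntLinearMap leibniz

variable {R : Type*} [CommRing R] [Algebra R K] (D : Derivation R K K)

def constants : Subfield K where
  carrier := {x | D x = 0}
  mul_mem' {a b} ha hb := by simp_all [D.leibniz]
  one_mem' := D.map_one_eq_zero
  add_mem' ha hb := by simp_all
  zero_mem' := D.map_zero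
  neg_mem' ha := by simp_all
  inv_mem' a ha := by simp_all [D.leibniz_inv]

variable {D}

theorem sum_apply_mul_eq_zero_of_constants {s : Finset ι} {f d : ι → K}
    (hd : ∀ i, D (d i) = 0) (h : ∑ i ∈ s, f i * d i = 0) : ∑ i ∈ s, D (f i) * d i = 0 := by
  simpa [D.leibniz, hd, mul_comm] using congrArg D h

theorem linearIndependent_of_inf_constants {k : Subfield K} (hk : ∀ x ∈ k, D x ∈ k)
    {d : ι → K} (hd : ∀ i, D (d i) = 0) (h : LinearIndependent ↥(k ⊓ D.constants) d) :
    LinearIndependent k d := by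
  classical
  rw [Subfield.linearIndependent_iff_forall_finset] at h ⊢
  intro s
  induction s using Finset.strongInduction with
  | H s ih =>
  intro g hg hsum j hj
  by_contra hgj
  set f : ι → K := fun i => g i * (g j)⁻¹
  have hf_mem : ∀ i ∈ s, f i ∈ k := fun i hi => mul_mem (hg i hi) (inv_mem (hg j hj))
  have hfj : f j = 1 := mul_inv_cancel₀ hgj
  have hf_sum : ∑ i ∈ s, f i * d i = 0 := by
    simp only [f, mul_right_comm _ (g j)⁻¹, ← Finset.sum_mul, hsum, zero_mul]
  have hDf_sum : ∑ i ∈ s.erase j, D (f i) * d i = 0 := by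
    rw [← sum_apply_mul_eq_zero_of_constants hd hf_sum, ← Finset.add_sum_erase s _ hj, hfj,
      D.map_one_eq_zero, zero_mul, zero_add]
  have hDf : ∀ i ∈ s, D (f i) = 0 := by
    intro i hi
    rcases eq_or_ne i j with rfl | hij
    · rw [hfj, D.map_one_eq_zero]
    · exact ih _ (Finset.erase_ssubset hj) _
        (fun i hi => hk _ (hf_mem i (Finset.mem_of_mem_erase hi))) hDf_sum i
        (Finset.mem_erase.2 ⟨hij, hi⟩)
  exact one_ne_zero (hfj ▸ h s f (fun i hi => ⟨hf_mem i hi, hDf i hi⟩) hf_sum j hj)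

theorem linearDisjoint_constants {k : Subfield K} (hk : ∀ x ∈ k, D x ∈ k) :
    (Subfield.extendScalars (inf_le_left : k ⊓ D.constants ≤ k)).LinearDisjoint
      (Subfield.extendScalars (inf_le_right : k ⊓ D.constants ≤ D.constants)) := by
  set C := Subfield.extendScalars (inf_le_right : k ⊓ D.constants ≤ D.constants)
  let b := Module.Basis.ofVectorSpace ↥(k ⊓ D.constants) C
  refine .of_basis_right b (linearIndependent_of_inf_constants hk (fun i => (b i).2) ?_)
  exact b.linearIndependent.map' C.val.toLinearMap (LinearMap.ker_eq_bot.2 C.val.injective)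

end Derivation

end

/-- Kolchin's linear disjointness theorem: if `(K, δ)` is a differential field and `k`
is a differential subfield, then `k` is linearly disjoint from the constant field `C_K`
over `C_k = k ∩ C_K`: any finite tuple of elements of `k` that is linearly independent
over the constants of `k` remains linearly independent over the constants of `K`.
Linear independence over the respective constant fields is expressed by hand: only the
trivial linear combination with constant coefficients vanishes. -/
theorem kolchin_linear_disjointness {K : Type*} [Field K] (δ : K → K)
    (hadd : ∀ x y : K, δ (x + y) = δ x + δ y)
    (hmul : ∀ x y : K, δ (x * y) = x * δ y + y * δ x)
    (k : Subfield K) (hδk : ∀ x ∈ k, δ x ∈ k) :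
    ∀ (n : ℕ) (a : Fin n → K), (∀ i, a i ∈ k) →
      (∀ c : Fin n → K, (∀ i, c i ∈ k ∧ δ (c i) = 0) →
        (∑ i, c i * a i) = 0 → ∀ i, c i = 0) →
      ∀ c : Fin n → K, (∀ i, δ (c i) = 0) →
        (∑ i, c i * a i) = 0 → ∀ i, c i = 0 := by
  intro n a ha hindep
  let D := Derivation.ofLeibniz δ hadd hmul
  let A := Subfield.extendScalars (inf_le_left : k ⊓ D.constants ≤ k)
  have ha' : LinearIndependent ↥(k ⊓ D.constants) (fun i => (⟨a i, ha i⟩ : A)) :=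
    .of_comp A.val.toLinearMap ((Subfield.linearIndependent_iff_of_fintype _).2 hindep)
  exact (Subfield.linearIndependent_iff_of_fintype D.constants).1
    ((D.linearDisjoint_constants hδk).linearIndependent_left ha')
end
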